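/- arXiv:math/0312342 — 5 statements merged into one kernel-verified Lean document; each statement's English description precedes it below -/
import Mathlib

section
/- Let p be a prime and n = p^s·m with s > 0 and p ∤ m. If p^s divides Γ(m), then there exists a finite group G of order n whose largest normal p-subgroup is trivial, i.e., O_p(G) = 1. -/
/-!
Write `m = ∏ q ^ t_q` and let `V = ∏_q (ℤ/q)^{t_q}`, an abelian group of order `m`. Its
automorphism group contains `∏_q GL(t_q, q)`, whose order is divisible by `Γ(m)`, hence by `p^s`;
let `P` be a subgroup of `Aut V` of order `p^s` and `G = V ⋊ P`. A normal `p`-subgroup `K` of `G`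
meets `V` trivially since `p ∤ |V|`, so `K` and `V` commute. As `V` is abelian, this means every
element of `K` acts trivially on `V`, so its `P`-component is `1` because `P` acts faithfully.
Thus `K ≤ V`, and `K = 1`.
-/

/-- `gam t q = (q^t - 1)(q^(t-1) - 1) ⋯ (q^2 - 1)(q - 1)`, with `gam 0 q = 1`. -/
def gam (t q : ℕ) : ℕ := ∏ i ∈ Finset.range t, (q ^ (i + 1) - 1)

/-- `Gam m = γ(t_1,q_1)⋯γ(t_k,q_k)` where `m = q_1^{t_1}⋯q_k^{t_k}` is the prime
factorization of `m` (so `Gam 1 = 1`). -/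
def Gam (m : ℕ) : ℕ := m.factorization.prod fun q t => gam t q

instance Nat.fact_prime_of_mem_primeFactors {m : ℕ} (q : m.primeFactors) : Fact (q : ℕ).Prime :=
  ⟨Nat.prime_of_mem_primeFactors q.2⟩

theorem gam_dvd_card_GL (t : ℕ) (F : Type*) [Field F] [Fintype F] :
    gam t (Fintype.card F) ∣ Nat.card (GL (Fin t) F) := by
  rw [Matrix.card_GL_field, Fin.prod_univ_eq_prod_range (fun i => _ ^ t - _ ^ i) t, gam,
    ← Finset.prod_range_reflect]
  refine Finset.prod_dvd_prod_of_dvd _ _ fun i hi => ⟨Fintype.card F ^ i, ?_⟩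
  have hi : i < t := Finset.mem_range.mp hi
  rw [Nat.sub_mul, one_mul, ← pow_add]
  congr 2
  omega

@[simps]
def MulAut.piCongrRight {ι : Type*} {M : ι → Type*} [∀ i, Mul (M i)] :
    (∀ i, MulAut (M i)) →* MulAut (∀ i, M i) where
  toFun := MulEquiv.piCongrRight
  map_one' := rfl
  map_mul' _ _ := rfl

theorem MulAut.piCongrRight_injective {ι : Type*} {M : ι → Type*} [∀ i, MulOneClass (M i)] :
    Function.Injective (MulAut.piCongrRight (M := M)) := by
  classical
  intro e f h
  ext i a
  simpa using congrFun (DFunLike.congr_fun h (Pi.mulSingle i a)) i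

def AddEquiv.toZModLinearEquivEquiv (n : ℕ) (M M₁ : Type*) [AddCommGroup M] [AddCommGroup M₁]
    [Module (ZMod n) M] [Module (ZMod n) M₁] : (M ≃+ M₁) ≃ (M ≃ₗ[ZMod n] M₁) where
  toFun e := e.toLinearEquiv (ZMod.map_smul e)
  invFun := LinearEquiv.toAddEquiv
  left_inv _ := rfl
  right_inv _ := rfl

theorem card_mulAut_multiplicative_eq_card_GL (n : ℕ) (ι : Type*) [Fintype ι] [DecidableEq ι] :
    Nat.card (MulAut (Multiplicative (ι → ZMod n))) = Nat.card (GL ι (ZMod n)) :=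
  Nat.card_congr <| AddEquiv.toMultiplicative.symm.trans <|
    (AddEquiv.toZModLinearEquivEquiv n _ _).trans
      ((LinearMap.GeneralLinearGroup.generalLinearEquiv _ _).symm.trans
        Matrix.GeneralLinearGroup.toLin.symm).toEquiv

abbrev PiZModFactorization (m : ℕ) : Type :=
  ∀ q : m.primeFactors, Multiplicative (Fin (m.factorization q) → ZMod q)

theorem card_piZModFactorization {m : ℕ} (hm : m ≠ 0) :
    Nat.card (PiZModFactorization m) = m := by
  simp only [Nat.card_eq_fintype_card, Fintype.card_pi, Fintype.card_multiplicative,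
    Finset.prod_const, Finset.card_univ, ZMod.card, Fintype.card_fin]
  exact (Nat.prod_primeFactors_coe_pow_factorization hm).symm

theorem Gam_eq_prod (m : ℕ) : Gam m = ∏ q : m.primeFactors, gam (m.factorization q) q := by
  rw [Gam, Finsupp.prod, Nat.support_factorization]
  exact (Finset.prod_coe_sort _ _).symm

theorem Gam_dvd_card_mulAut_piZModFactorization (m : ℕ) :
    Gam m ∣ Nat.card (MulAut (PiZModFactorization m)) :=
  calc Gam m = ∏ q : m.primeFactors, gam (m.factorization q) q := Gam_eq_prod m
    _ ∣ ∏ q : m.primeFactors, Nat.card (GL (Fin (m.factorization q)) (ZMod q)) :=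
      Finset.prod_dvd_prod_of_dvd _ _ fun q _ => by
        simpa only [ZMod.card] using gam_dvd_card_GL (m.factorization q) (ZMod q)
    _ = Nat.card (∀ q : m.primeFactors,
          MulAut (Multiplicative (Fin (m.factorization q) → ZMod q))) := by
      simp only [Nat.card_pi, card_mulAut_multiplicative_eq_card_GL]
    _ ∣ _ := Subgroup.card_dvd_of_injective _ MulAut.piCongrRight_injective

namespace SemidirectProduct

variable {N G : Type*} [CommGroup N] [Group G] {φ : G →* MulAut N}

theorem eq_bot_of_normal_of_isPGroup (hφ : Function.Injective φ) {p : ℕ}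
    (hp : p.Coprime (Nat.card N)) {K : Subgroup (N ⋊[φ] G)} (hK : K.Normal) (hKp : IsPGroup p K) :
    K = ⊥ := by
  have hN : (inl : N →* N ⋊[φ] G).range.Normal := range_inl_eq_ker_rightHom (φ := φ) ▸ inferInstance
  have hdisj : Disjoint K inl.range :=
    hKp.disjoint_of_coprime (IsPGroup.card.of_equiv (MonoidHom.ofInjective inl_injective)) hp
  have hright : ∀ g ∈ K, g.right = 1 := fun g hg => hφ <| by
    rw [map_one]
    ext n
    have hcomm := congrArg left
      (Subgroup.commute_of_normal_of_disjoint _ _ hK hN hdisj g (inl n) hg ⟨n, rfl⟩).eq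
    simp only [mul_left, left_inl, right_inl, map_one, MulAut.one_apply] at hcomm
    rw [mul_comm n] at hcomm
    exact mul_left_cancel hcomm
  refine (Subgroup.eq_bot_iff_forall K).mpr fun g hg => Subgroup.disjoint_def.mp hdisj hg ?_
  rw [range_inl_eq_ker_rightHom]
  exact hright g hg

end SemidirectProduct

theorem exists_group_pCore_trivial_general (p s m : ℕ) (hp : p.Prime)
    (hpm : ¬ p ∣ m) (hdvd : p ^ s ∣ Gam m) :
    ∃ (G : Type) (_ : Group G) (_ : Finite G), Nat.card G = p ^ s * m ∧
      ∀ N : Subgroup G, N.Normal → IsPGroup p N → N = ⊥ := by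
  have : Fact p.Prime := ⟨hp⟩
  have hm : m ≠ 0 := by rintro rfl; exact hpm (dvd_zero p)
  have hcardV := card_piZModFactorization hm
  obtain ⟨P, hP⟩ := Sylow.exists_subgroup_card_pow_prime p
    (hdvd.trans (Gam_dvd_card_mulAut_piZModFactorization m))
  have hcardG : Nat.card (PiZModFactorization m ⋊[P.subtype] P) = p ^ s * m := by
    rw [SemidirectProduct.card, hcardV, hP, mul_comm]
  refine ⟨_, inferInstance, Nat.finite_of_card_ne_zero ?_, hcardG, fun K hK hKp => ?_⟩
  · rw [hcardG]
    exact mul_ne_zero (pow_ne_zero _ hp.ne_zero) hm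
  · refine SemidirectProduct.eq_bot_of_normal_of_isPGroup P.subtype_injective ?_ hK hKp
    rw [hcardV]
    exact hp.coprime_iff_not_dvd.mpr hpm

/-- If `n = p^s·m` with `s > 0`, `p ∤ m`, and `p^s ∣ Γ(m)`, then there exists a finite
group of order `n` whose largest normal `p`-subgroup is trivial, i.e. every normal
`p`-subgroup is trivial. -/
theorem exists_group_pCore_trivial (p s m : ℕ) (hp : p.Prime) (hs : 0 < s)
    (hpm : ¬ p ∣ m) (hdvd : p ^ s ∣ Gam m) :
    ∃ (G : Type) (_ : Group G) (_ : Finite G), Nat.card G = p ^ s * m ∧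
      ∀ N : Subgroup G, N.Normal → IsPGroup p N → N = ⊥ :=
  exists_group_pCore_trivial_general p s m hp hpm hdvd
end

section
/- For any prime q and natural numbers n, t with 0 ≤ n ≤ t, the product γ(n,q)·γ(t−n,q) divides γ(t,q). -/
lemma gam_succ (t q : ℕ) : gam (t + 1) q = (q ^ (t + 1) - 1) * gam t q := by
  rw [gam, Finset.prod_range_succ, mul_comm]; rfl

lemma gam_aux (q : ℕ) (hq : 1 ≤ q) : ∀ t n, n ≤ t →
    gam n q * gam (t - n) q ∣ gam t q := by
  intro t
  induction t with
  | zero => intro n hn; interval_cases n; simp [gam]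
  | succ t ih =>
    intro n hn
    rcases Nat.eq_zero_or_pos n with rfl | hpos
    · simp [gam]
    rcases eq_or_lt_of_le hn with rfl | hlt
    · simp [gam]
    have hn' : n ≤ t := Nat.lt_succ_iff.mp hlt
    obtain ⟨m, rfl⟩ := Nat.exists_eq_add_of_le hpos
    set n := 1 + m with hndef
    have hmt : m ≤ t := by omega
    -- key identity
    have h1 : 1 ≤ q ^ n := Nat.one_le_pow _ _ (by omega)
    have h2 : q ^ n ≤ q ^ (t + 1) := Nat.pow_le_pow_right hq (by omega)
    have h3 : q ^ n * q ^ (t + 1 - n) = q ^ (t + 1) := by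
      rw [← pow_add]; congr 1; omega
    have hkey : q ^ (t + 1) - 1 = (q ^ n - 1) + q ^ n * (q ^ (t + 1 - n) - 1) := by
      rw [Nat.mul_sub, h3, mul_one]; omega
    rw [gam_succ, hkey, add_mul]
    apply dvd_add
    · -- gam n q * gam (t+1-n) q ∣ (q^n - 1) * gam t q
      have hg : gam n q = (q ^ n - 1) * gam m q := by
        rw [hndef, add_comm 1 m, gam_succ, add_comm m 1]
      have hsub : t + 1 - n = t - m := by omega
      rw [hg, hsub, mul_assoc]
      exact mul_dvd_mul_left _ (ih m hmt)
    · -- gam n q * gam (t+1-n) q ∣ q^n * (q^(t+1-n)-1) * gam t q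
      have hsub : t + 1 - n = (t - n) + 1 := by omega
      rw [hsub, gam_succ]
      have : gam n q * ((q ^ (t - n + 1) - 1) * gam (t - n) q)
          = (q ^ (t - n + 1) - 1) * (gam n q * gam (t - n) q) := by ring
      rw [this]
      have h4 : (q ^ (t - n + 1) - 1) * (gam n q * gam (t - n) q)
          ∣ (q ^ (t - n + 1) - 1) * gam t q :=
        mul_dvd_mul_left _ (ih n hn')
      exact h4.trans (mul_dvd_mul_right (dvd_mul_left _ _) _)

/-- For any prime `q` and natural numbers `n ≤ t`,
`γ(n,q)·γ(t−n,q)` divides `γ(t,q)`. -/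
theorem gam_mul_gam_dvd_gam (q n t : ℕ) (hq : q.Prime) (hn : n ≤ t) :
    gam n q * gam (t - n) q ∣ gam t q := by
  exact gam_aux q hq.one_lt.le t n hn
end

section
/- Let p and q be distinct primes and let G be a finite group of order p^s·q^t with s, t > 0. Suppose K is a normal Sylow q-subgroup of G that is also a minimal normal subgroup of G, and let P be a Sylow p-subgroup of G that is not normal in G. Then P is self-normalizing: N_G(P) = P. -/
open Pointwise


/-- Let `G` be a finite group of order `p^s·q^t` (`p ≠ q` primes, `s, t > 0`), let `K`
be a normal Sylow `q`-subgroup of `G` that is a minimal normal subgroup, and let `P`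
be a Sylow `p`-subgroup of `G` that is not normal.  Then `N_G(P) = P`. -/
theorem sylow_self_normalizing_of_minimal_normal_sylow (p q s t : ℕ)
    (hp : p.Prime) (hq : q.Prime) (hpq : p ≠ q) (hs : 0 < s) (ht : 0 < t)
    (G : Type*) [Group G] [Finite G] (hcard : Nat.card G = p ^ s * q ^ t)
    (K : Subgroup G) (hKnormal : K.Normal) (hKcard : Nat.card K = q ^ t)
    (hKmin : ∀ N : Subgroup G, N.Normal → N ≤ K → N ≠ ⊥ → N = K)
    (P : Sylow p G) (hP : ¬ (P : Subgroup G).Normal) :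
    Subgroup.normalizer ((P : Subgroup G) : Set G) = P := by
  have hpfact : Fact p.Prime := ⟨hp⟩
  have hqfact : Fact q.Prime := ⟨hq⟩
  have hps : p ^ s ≠ 0 := pow_ne_zero _ hp.pos.ne'
  have hqt : q ^ t ≠ 0 := pow_ne_zero _ hq.pos.ne'
  -- factorization facts
  have hfq : (Nat.card G).factorization q = t := by
    rw [hcard, Nat.factorization_mul hps hqt, Nat.Prime.factorization_pow hp,
      Nat.Prime.factorization_pow hq]
    simp [Finsupp.single_apply, hpq]
  have hfp : (Nat.card G).factorization p = s := by
    rw [hcard, Nat.factorization_mul hps hqt, Nat.Prime.factorization_pow hp,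
      Nat.Prime.factorization_pow hq]
    simp [Finsupp.single_apply, Ne.symm hpq]
  have hPcard : Nat.card (P : Subgroup G) = p ^ s := by
    rw [P.card_eq_multiplicity, hfp]
  -- K is the unique Sylow q-subgroup
  let KS : Sylow q G := Sylow.ofCard K (by rw [hKcard, hfq])
  have hKSK : (KS : Subgroup G) = K := Sylow.coe_ofCard K _
  haveI : Unique (Sylow q G) := Sylow.unique_of_normal KS (by
    show (KS : Subgroup G).Normal
    rw [hKSK]; exact hKnormal)
  -- every q-subgroup is contained in K
  have hqsub : ∀ H : Subgroup G, IsPGroup q H → H ≤ K := by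
    intro H hH
    obtain ⟨Q, hQ⟩ := hH.exists_le_sylow
    have : Q = KS := Subsingleton.elim _ _
    rw [this, hKSK] at hQ
    exact hQ
  -- P ⊓ K = ⊥
  have hPK : (P : Subgroup G) ⊓ K = ⊥ := by
    have h1 : Nat.card ((P : Subgroup G) ⊓ K : Subgroup G) ∣ p ^ s := by
      rw [← hPcard]; exact Subgroup.card_dvd_of_le inf_le_left
    have h2 : Nat.card ((P : Subgroup G) ⊓ K : Subgroup G) ∣ q ^ t := by
      rw [← hKcard]; exact Subgroup.card_dvd_of_le inf_le_right
    have hco : (Nat.Coprime (p ^ s) (q ^ t)) :=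
      Nat.Coprime.pow _ _ ((Nat.coprime_primes hp hq).mpr hpq)
    exact Subgroup.eq_bot_of_card_eq _ (Nat.eq_one_of_dvd_coprimes hco h1 h2)
  -- K is abelian
  have hKab : ∀ x ∈ K, ∀ y ∈ K, x * y = y * x := by
    have hZnormal : (Subgroup.centralizer (K : Set G) ⊓ K).Normal := by
      constructor
      intro n hn g
      obtain ⟨hn1, hn2⟩ := hn
      refine ⟨Subgroup.mem_centralizer_iff.mpr fun k hk => ?_, hKnormal.conj_mem n hn2 g⟩
      have hk' : g⁻¹ * k * g ∈ K := by
        have := hKnormal.conj_mem k hk g⁻¹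
        simpa using this
      have := Subgroup.mem_centralizer_iff.mp hn1 _ hk'
      -- (g⁻¹ k g) * n = n * (g⁻¹ k g)  ⟹  k * (g n g⁻¹) = (g n g⁻¹) * k
      have h2 : g * ((g⁻¹ * k * g) * n) * g⁻¹ = g * (n * (g⁻¹ * k * g)) * g⁻¹ := by
        rw [this]
      group at h2 ⊢
      convert h2 using 1 <;> group
    have hZne : Subgroup.centralizer (K : Set G) ⊓ K ≠ ⊥ := by
      have hKpg : IsPGroup q K := IsPGroup.of_card hKcard
      have : Nontrivial K := by
        rw [← Finite.one_lt_card_iff_nontrivial, hKcard]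
        exact Nat.one_lt_pow ht.ne' hq.one_lt
      have := IsPGroup.center_nontrivial hKpg
      obtain ⟨z, hz⟩ := exists_ne (1 : Subgroup.center (K : Subgroup G))
      intro hbot
      have hzmem : (z : K) ∈ Subgroup.center (K : Subgroup G) := z.2
      have hzc : ((z : K) : G) ∈ Subgroup.centralizer (K : Set G) := by
        refine Subgroup.mem_centralizer_iff.mpr fun k hk => ?_
        have := (Subgroup.mem_center_iff.mp hzmem ⟨k, hk⟩)
        exact congrArg Subtype.val this
      have : ((z : K) : G) ∈ Subgroup.centralizer (K : Set G) ⊓ K := ⟨hzc, (z : K).2⟩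
      rw [hbot, Subgroup.mem_bot] at this
      apply hz
      ext
      exact this
    have hZK := hKmin _ hZnormal inf_le_right hZne
    intro x hx y hy
    have hxc : x ∈ Subgroup.centralizer (K : Set G) := by
      have : x ∈ Subgroup.centralizer (K : Set G) ⊓ K := by rw [hZK]; exact hx
      exact this.1
    exact (Subgroup.mem_centralizer_iff.mp hxc y hy).symm
  -- K ⊔ P = ⊤
  have hKP : K ⊔ (P : Subgroup G) = ⊤ := by
    have h1 : q ^ t ∣ Nat.card (K ⊔ (P : Subgroup G) : Subgroup G) := by
      rw [← hKcard]; exact Subgroup.card_dvd_of_le le_sup_left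
    have h2 : p ^ s ∣ Nat.card (K ⊔ (P : Subgroup G) : Subgroup G) := by
      rw [← hPcard]; exact Subgroup.card_dvd_of_le le_sup_right
    have hco : (Nat.Coprime (p ^ s) (q ^ t)) :=
      Nat.Coprime.pow _ _ ((Nat.coprime_primes hp hq).mpr hpq)
    have hdvd : p ^ s * q ^ t ∣ Nat.card (K ⊔ (P : Subgroup G) : Subgroup G) :=
      hco.mul_dvd_of_dvd_of_dvd h2 h1
    have hle : Nat.card (K ⊔ (P : Subgroup G) : Subgroup G) ∣ Nat.card G :=
      Subgroup.card_subgroup_dvd_card _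
    rw [hcard] at hle
    exact Subgroup.eq_top_of_card_eq _
      (by rw [hcard]; exact Nat.dvd_antisymm hle hdvd)
  -- C := K ⊓ centralizer P is normal
  set C := K ⊓ Subgroup.centralizer ((P : Subgroup G) : Set G) with hC
  have hCnormal : C.Normal := by
    constructor
    intro n hn g
    have hg : g ∈ (K : Set G) * ((P : Subgroup G) : Set G) := by
      rw [← Subgroup.normal_mul]
      rw [hKP]
      trivial
    obtain ⟨k, hk, x, hx, rfl⟩ := hg
    obtain ⟨hn1, hn2⟩ := hn
    -- first conjugate by x
    have hm1 : x * n * x⁻¹ ∈ K := hKnormal.conj_mem n hn1 x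
    have hm2 : x * n * x⁻¹ ∈ Subgroup.centralizer ((P : Subgroup G) : Set G) := by
      refine Subgroup.mem_centralizer_iff.mpr fun y hy => ?_
      have hy' : x⁻¹ * y * x ∈ (P : Subgroup G) := by
        have := Subgroup.mul_mem _ (Subgroup.mul_mem _ ((P : Subgroup G).inv_mem hx) hy) hx
        simpa [mul_assoc] using this
      have := Subgroup.mem_centralizer_iff.mp hn2 _ hy'
      have h2 : x * ((x⁻¹ * y * x) * n) * x⁻¹ = x * (n * (x⁻¹ * y * x)) * x⁻¹ := by rw [this]
      group at h2 ⊢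
      convert h2 using 1 <;> group
    -- conjugation by k fixes x n x⁻¹ since K is abelian
    have hcomm : k * (x * n * x⁻¹) * k⁻¹ = x * n * x⁻¹ := by
      rw [hKab k hk _ hm1]
      group
    have : (k * x) * n * (k * x)⁻¹ = k * (x * n * x⁻¹) * k⁻¹ := by group
    rw [this, hcomm]
    exact ⟨hm1, hm2⟩
  -- C ≠ K, hence C = ⊥
  have hCbot : C = ⊥ := by
    by_contra hne
    have hCK := hKmin C hCnormal inf_le_left hne
    apply hP
    rw [← Subgroup.normalizer_eq_top_iff]
    rw [eq_top_iff, ← hKP, sup_le_iff]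
    constructor
    · intro k hk
      have hkc : k ∈ Subgroup.centralizer ((P : Subgroup G) : Set G) := by
        have : k ∈ C := hCK ▸ hk
        exact this.2
      rw [Subgroup.mem_normalizer_iff]
      intro h
      constructor
      · intro hh
        have e := Subgroup.mem_centralizer_iff.mp hkc h hh
        have e2 : k * h * k⁻¹ = h := by rw [← e]; group
        rw [e2]; exact hh
      · intro hh
        have e := Subgroup.mem_centralizer_iff.mp hkc _ hh
        have e1 : (k * h * k⁻¹) * k = k * h := by group
        have e2 : h = k * h * k⁻¹ := mul_left_cancel (a := k) (by rw [← e, e1])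
        rw [e2]; exact hh
    · exact Subgroup.le_normalizer
  -- N := normalizer P satisfies N ⊓ K = ⊥
  set N := Subgroup.normalizer ((P : Subgroup G) : Set G) with hN
  have hNK : N ⊓ K = ⊥ := by
    rw [eq_bot_iff, ← hCbot]
    intro x hx
    obtain ⟨hx1, hx2⟩ := hx
    refine ⟨hx2, Subgroup.mem_centralizer_iff.mpr fun y hy => ?_⟩
    -- commutator x y x⁻¹ y⁻¹ lies in P ⊓ K = ⊥
    have hc1 : x * y * x⁻¹ ∈ (P : Subgroup G) :=
      (Subgroup.mem_normalizer_iff.mp hx1 y).mp hy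
    have hcP : x * y * x⁻¹ * y⁻¹ ∈ (P : Subgroup G) :=
      Subgroup.mul_mem _ hc1 ((P : Subgroup G).inv_mem hy)
    have hcK : x * y * x⁻¹ * y⁻¹ ∈ K := by
      have h1 : y * x⁻¹ * y⁻¹ ∈ K := by
        have := hKnormal.conj_mem x⁻¹ (K.inv_mem hx2) y
        simpa [mul_assoc] using this
      have := K.mul_mem hx2 h1
      simpa [mul_assoc] using this
    have : x * y * x⁻¹ * y⁻¹ ∈ (P : Subgroup G) ⊓ K := ⟨hcP, hcK⟩
    rw [hPK, Subgroup.mem_bot] at this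
    have hxy : x * y = y * x := by
      have h2 : x * y * x⁻¹ * y⁻¹ * y * x = 1 * y * x := by rw [this]
      group at h2
      rw [h2]
    exact hxy.symm
  -- q does not divide card N
  have hqN : ¬ q ∣ Nat.card N := by
    intro hdvd
    obtain ⟨g, hg⟩ := exists_prime_orderOf_dvd_card' (G := N) q hdvd
    have hgG : orderOf (g : G) = q := by
      rw [← hg]
      exact orderOf_injective N.subtype N.subtype_injective g
    have hzp : IsPGroup q (Subgroup.zpowers (g : G)) := by
      apply IsPGroup.of_card (n := 1)
      rw [Nat.card_zpowers, hgG, pow_one]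
    have hle := hqsub _ hzp
    have hgK : (g : G) ∈ K := hle (Subgroup.mem_zpowers _)
    have : (g : G) ∈ N ⊓ K := ⟨g.2, hgK⟩
    rw [hNK, Subgroup.mem_bot] at this
    rw [this, orderOf_one] at hgG
    exact hq.one_lt.ne' hgG.symm
  -- card N divides p^s
  have hNdvd : Nat.card N ∣ p ^ s := by
    have h1 : Nat.card N ∣ p ^ s * q ^ t := by
      rw [← hcard]; exact Subgroup.card_subgroup_dvd_card _
    have hco : Nat.Coprime (Nat.card N) (q ^ t) :=
      Nat.Coprime.pow_right _ ((Nat.Prime.coprime_iff_not_dvd hq).mpr hqN).symm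
    exact hco.dvd_of_dvd_mul_right h1
  -- conclude
  symm
  apply Subgroup.eq_of_le_of_card_ge Subgroup.le_normalizer
  rw [hPcard]
  exact Nat.le_of_dvd (by positivity) hNdvd
end

section
/- Let p and q be distinct primes and let G be a finite group of order p^s·q^t with s, t > 0. Suppose K is a normal Sylow q-subgroup of G that is also a minimal normal subgroup of G, and suppose some Sylow p-subgroup of G is not normal in G. Then K acts regularly on the set Syl_p(G) of Sylow p-subgroups of G by conjugation: for any two Sylow p-subgroups P and Q of G there is a unique k ∈ K with kPk⁻¹ = Q. -/
/-!
The centre of a minimal normal `q`-subgroup `K` is characteristic in `K`, hence normal in `G`,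
and nontrivial, so `K` is abelian. By orders, `K` complements every Sylow `p`-subgroup `P`, and
so `G = K N_G(P)`. Then `N_G(P) ⊓ K` is normalized by `N_G(P)` and centralized by `K`, hence
normal in `G`; it cannot be `K`, since then `N_G(P) = G`, so by minimality it is trivial. Thus `K`
is a complement of the stabilizer `N_G(P)` of `P` in the transitive action of `G` on `Syl_p(G)`,
so it acts regularly.
-/

open Subgroup

namespace MulAction

theorem existsUnique_smul_eq_of_isComplement' {G α : Type*} [Group G] [MulAction G α]
    [IsPretransitive G α] {H : Subgroup G} {a : α} (h : IsComplement' H (stabilizer G a))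
    (b : α) : ∃! k : H, (k : G) • a = b := by
  obtain ⟨g, rfl⟩ := exists_smul_eq G a b
  obtain ⟨⟨k, s⟩, hks⟩ := h.2 g
  refine ⟨k, by rw [← hks, mul_smul, mem_stabilizer_iff.mp s.2], fun k' hk' => ?_⟩
  have hs' : (k' : G)⁻¹ * g ∈ stabilizer G a := by
    rw [mem_stabilizer_iff, mul_smul, ← hk', inv_smul_smul]
  exact congrArg Prod.fst (@h.1 (k', ⟨_, hs'⟩) (k, s) (by simp [hks]))

end MulAction

namespace Subgroup

variable {G : Type*} [Group G]

theorem isComplement'_of_isCompl {H K : Subgroup G} [H.Normal] (h : IsCompl H K) :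
    IsComplement' H K :=
  isComplement'_of_disjoint_and_mul_eq_univ h.disjoint
    (by rw [← normal_mul, h.sup_eq_top, coe_top])

theorem normal_inf_of_sup_eq_top {H K : Subgroup G} [K.Normal] [IsMulCommutative K]
    (h : K ⊔ H = ⊤) : (H ⊓ K).Normal := by
  rw [← normalizer_eq_top_iff, eq_top_iff, ← h]
  refine sup_le ?_ ?_
  · exact (le_centralizer (H := K)).trans
      ((centralizer_le inf_le_right).trans (centralizer_le_normalizer _))
  · exact (le_inf le_normalizer le_normalizer_of_normal).trans inf_normalizer_le_normalizer_inf

theorem isComplement'_normalizer_of_minimal_normal {H K : Subgroup G} [K.Normal]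
    [IsMulCommutative K] (hmin : ∀ N : Subgroup G, N.Normal → N ≤ K → N ≠ ⊥ → N = K)
    (hH : ¬ H.Normal) (hKH : K ⊔ H = ⊤) : IsComplement' K (normalizer H) := by
  have hKN : K ⊔ normalizer H = ⊤ := top_unique (hKH ▸ sup_le_sup_left le_normalizer K)
  refine isComplement'_of_isCompl ⟨?_, codisjoint_iff.mpr hKN⟩
  rw [disjoint_iff, inf_comm]
  by_contra hbot
  have hKle : K ≤ normalizer H :=
    inf_eq_right.mp (hmin _ (normal_inf_of_sup_eq_top hKN) inf_le_right hbot)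
  exact hH (normalizer_eq_top_iff.mp (top_unique (hKH ▸ sup_le hKle le_normalizer)))

end Subgroup

theorem IsPGroup.isMulCommutative_of_minimal_normal {G : Type*} [Group G] [Finite G] {q : ℕ}
    [Fact q.Prime] {K : Subgroup G} [K.Normal] (hK : IsPGroup q K)
    (hmin : ∀ N : Subgroup G, N.Normal → N ≤ K → N ≠ ⊥ → N = K) :
    IsMulCommutative K := by
  rcases subsingleton_or_nontrivial K with _ | _
  · exact ⟨⟨fun _ _ => Subsingleton.elim _ _⟩⟩
  have hZ : (center K).map K.subtype = K := by
    refine hmin _ inferInstance (map_subtype_le _) ?_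
    rw [Ne, map_eq_bot_iff_of_injective _ K.subtype_injective]
    exact (nontrivial_iff_ne_bot _).mp hK.center_nontrivial
  rw [← center_eq_top_iff]
  apply map_injective K.subtype_injective
  rw [hZ, ← MonoidHom.range_eq_map, range_subtype]

theorem Sylow.card_eq_of_card_eq_pow_mul {G : Type*} [Group G] [Finite G] {p s m : ℕ}
    [hp : Fact p.Prime] (P : Sylow p G) (hm : ¬ p ∣ m) (hG : Nat.card G = p ^ s * m) :
    Nat.card P = p ^ s := by
  rw [P.card_eq_multiplicity, hG, Nat.factorization_mul_apply_of_coprime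
    ((hp.out.coprime_iff_not_dvd.mpr hm).pow_left s), hp.out.factorization_pow,
    Finsupp.single_eq_same, Nat.factorization_eq_zero_of_not_dvd hm, add_zero]

theorem Sylow.not_normal_of_not_normal {G : Type*} [Group G] [Finite G] {p : ℕ} [Fact p.Prime]
    {P : Sylow p G} (hP : ¬ (P : Subgroup G).Normal) (Q : Sylow p G) :
    ¬ (Q : Subgroup G).Normal := fun hQ =>
  letI := Q.unique_of_normal hQ
  hP P.normal_of_subsingleton

theorem regular_action_of_minimal_normal_sylow_general (p q s t : ℕ)
    (hp : p.Prime) (hq : q.Prime) (hpq : p ≠ q)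
    (G : Type*) [Group G] [Finite G] (hcard : Nat.card G = p ^ s * q ^ t)
    (K : Subgroup G) (hKnormal : K.Normal) (hKcard : Nat.card K = q ^ t)
    (hKmin : ∀ N : Subgroup G, N.Normal → N ≤ K → N ≠ ⊥ → N = K)
    (hP : ∃ P : Sylow p G, ¬ (P : Subgroup G).Normal) :
    ∀ P Q : Sylow p G, ∃! k : K, (k : G) • P = Q := by
  have : Fact p.Prime := ⟨hp⟩
  have : Fact q.Prime := ⟨hq⟩
  have : IsMulCommutative K := (IsPGroup.of_card hKcard).isMulCommutative_of_minimal_normal hKmin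
  have hpq' : p.Coprime q := (Nat.coprime_primes hp hq).mpr hpq
  intro P Q
  have hPcard : Nat.card P = p ^ s :=
    P.card_eq_of_card_eq_pow_mul (hp.coprime_iff_not_dvd.mp (hpq'.pow_right t)) hcard
  have hKP : K ⊔ P = ⊤ := (isComplement'_of_coprime (H := K) (K := P)
    (by rw [hKcard, hPcard, hcard, mul_comm])
    (by rw [hKcard, hPcard]; exact (hpq'.pow s t).symm)).sup_eq_top
  refine MulAction.existsUnique_smul_eq_of_isComplement' ?_ Q
  rw [P.stabilizer_eq_normalizer]
  exact isComplement'_normalizer_of_minimal_normal hKmin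
    (hP.elim fun _ h => Sylow.not_normal_of_not_normal h P) hKP

/-- Let `G` be a finite group of order `p^s·q^t` (`p ≠ q` primes, `s, t > 0`), let `K`
be a normal Sylow `q`-subgroup of `G` that is a minimal normal subgroup, and suppose
some Sylow `p`-subgroup of `G` is not normal.  Then `K` acts regularly on `Syl_p(G)`
by conjugation: for any Sylow `p`-subgroups `P, Q` there is a unique `k ∈ K` with
`kPk⁻¹ = Q`. -/
theorem regular_action_of_minimal_normal_sylow (p q s t : ℕ)
    (hp : p.Prime) (hq : q.Prime) (hpq : p ≠ q) (hs : 0 < s) (ht : 0 < t)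
    (G : Type*) [Group G] [Finite G] (hcard : Nat.card G = p ^ s * q ^ t)
    (K : Subgroup G) (hKnormal : K.Normal) (hKcard : Nat.card K = q ^ t)
    (hKmin : ∀ N : Subgroup G, N.Normal → N ≤ K → N ≠ ⊥ → N = K)
    (hP : ∃ P : Sylow p G, ¬ (P : Subgroup G).Normal) :
    ∀ P Q : Sylow p G, ∃! k : K, (k : G) • P = Q :=
  regular_action_of_minimal_normal_sylow_general p q s t hp hq hpq G hcard K hKnormal hKcard hKmin
    hP
end

section
/- Let p and q be distinct primes and let G be a finite group of order p^s·q^t with s, t > 0. Suppose K is a normal Sylow q-subgroup of G that is also a minimal normal subgroup of G, and suppose some Sylow p-subgroup of G is not normal in G. Then the action of G by conjugation on the set Syl_p(G) of its Sylow p-subgroups is primitive (transitive with maximal point stabilizers). -/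
/-!
All Sylow `p`-subgroups are conjugate, and none is normal, so the stabilizer of `P` is its
normalizer and it is proper. Since `|K|` and `|P|` are coprime, `KP = G`. A minimal normal
`q`-subgroup is abelian (its centre is a nontrivial normal subgroup of `G`). If `P ≤ H`, then
`K ∩ H` is normalized by `H` and, `K` being abelian, by `K`, hence by `KH = G`; so it is `1` or
`K`. Dedekind's law `H = P (K ∩ H)` then gives `H = P` or `H = G`: `P` is maximal, and
therefore equal to its normalizer.
-/

open scoped Pointwise

namespace Subgroup

variable {G : Type*} [Group G]

theorem isMulCommutative_of_minimal_normal_of_isPGroup [Finite G] {q : ℕ} [Fact q.Prime]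
    {K : Subgroup G} [K.Normal] (hK : IsPGroup q K)
    (hKmin : ∀ N : Subgroup G, N.Normal → N ≤ K → N ≠ ⊥ → N = K) : IsMulCommutative K := by
  rcases subsingleton_or_nontrivial K with _ | _
  · infer_instance
  -- The centre of `K` is characteristic in `K`, hence normal in `G`, and nontrivial.
  have hZ : (center K).map K.subtype = K := by
    refine hKmin _ inferInstance (map_subtype_le _) ?_
    rw [Ne, map_eq_bot_iff_of_injective _ K.subtype_injective, ← Ne, ← nontrivial_iff_ne_bot]
    exact hK.center_nontrivial
  rw [← center_eq_top_iff]
  refine map_injective K.subtype_injective ?_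
  rw [hZ, ← MonoidHom.range_eq_map, range_subtype]

theorem inf_normal_of_sup_eq_top {K H : Subgroup G} [K.Normal] [IsMulCommutative K]
    (hKH : K ⊔ H = ⊤) : (K ⊓ H).Normal := by
  refine ⟨fun d hd g => ?_⟩
  obtain ⟨k, hk, h, hh, rfl⟩ : g ∈ (K : Set G) * (H : Set G) := by
    rw [← normal_mul, hKH]; trivial
  have hhd : h * d * h⁻¹ ∈ K ⊓ H :=
    ⟨Normal.conj_mem inferInstance d hd.1 h, H.mul_mem (H.mul_mem hh hd.2) (H.inv_mem hh)⟩
  have hconj : k * h * d * (k * h)⁻¹ = h * d * h⁻¹ := by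
    calc k * h * d * (k * h)⁻¹ = k * (h * d * h⁻¹) * k⁻¹ := by group
      _ = h * d * h⁻¹ := by rw [setLike_mul_comm hk hhd.1]; group
  rwa [hconj]

theorem sup_inf_eq_of_le {K P H : Subgroup G} [K.Normal] (hKP : K ⊔ P = ⊤) (hPH : P ≤ H) :
    P ⊔ K ⊓ H = H := by
  refine le_antisymm (sup_le hPH inf_le_right) fun x hx => ?_
  have hx' : x ∈ (P : Set G) * (K : Set G) ∩ (H : Set G) :=
    ⟨by rw [← mul_normal, sup_comm, hKP]; trivial, hx⟩
  rw [← mul_inf_assoc P K H hPH] at hx'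
  obtain ⟨y, hy, z, hz, rfl⟩ := hx'
  exact mul_mem (mem_sup_left hy) (mem_sup_right hz)

theorem isCoatom_of_sup_eq_top {K P : Subgroup G} [K.Normal] [IsMulCommutative K]
    (hKmin : ∀ N : Subgroup G, N.Normal → N ≤ K → N ≠ ⊥ → N = K)
    (hKP : K ⊔ P = ⊤) (hP : P ≠ ⊤) : IsCoatom P := by
  refine ⟨hP, fun H hPH => ?_⟩
  have hKH : K ⊔ H = ⊤ := top_le_iff.mp (hKP ▸ sup_le_sup_left hPH.le K)
  have hnormal := inf_normal_of_sup_eq_top hKH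
  rcases eq_or_ne (K ⊓ H) ⊥ with hbot | hne
  · have hHP := sup_inf_eq_of_le hKP hPH.le
    rw [hbot, sup_bot_eq] at hHP
    exact absurd hHP hPH.ne
  · have hKle : K ≤ H := hKmin _ hnormal inf_le_left hne ▸ inf_le_right
    exact top_le_iff.mp (hKP ▸ sup_le hKle hPH.le)

theorem normalizer_eq_self_of_isCoatom {P : Subgroup G} (hP : IsCoatom P) (hPn : ¬ P.Normal) :
    normalizer (P : Set G) = P :=
  (hP.le_iff.mp le_normalizer).resolve_left (mt normalizer_eq_top_iff.mp hPn)

theorem sup_eq_top_of_coprime [Finite G] {m n : ℕ} (hmn : m.Coprime n)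
    (hG : Nat.card G = m * n) {K H : Subgroup G} (hK : m ∣ Nat.card K) (hH : n ∣ Nat.card H) :
    K ⊔ H = ⊤ := by
  refine eq_top_of_card_eq _ (Nat.dvd_antisymm ?_ ?_)
  · exact card_top (G := G) ▸ card_dvd_of_le le_top
  · exact hG ▸ hmn.mul_dvd_of_dvd_of_dvd (hK.trans (card_dvd_of_le le_sup_left))
      (hH.trans (card_dvd_of_le le_sup_right))

end Subgroup

theorem Sylow.not_normal_of_exists_not_normal {G : Type*} [Group G] [Finite G] {p : ℕ}
    [Fact p.Prime] (hP : ∃ P : Sylow p G, ¬ (P : Subgroup G).Normal) (P : Sylow p G) :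
    ¬ (P : Subgroup G).Normal := by
  obtain ⟨Q, hQ⟩ := hP
  intro hPn
  have : Unique (Sylow p G) := Sylow.unique_of_normal P hPn
  exact hQ (Subsingleton.elim P Q ▸ hPn)

theorem primitive_action_of_minimal_normal_sylow_general (p q s t : ℕ)
    (hp : p.Prime) (hq : q.Prime) (hpq : p ≠ q)
    (G : Type*) [Group G] [Finite G] (hcard : Nat.card G = p ^ s * q ^ t)
    (K : Subgroup G) (hKnormal : K.Normal) (hKcard : Nat.card K = q ^ t)
    (hKmin : ∀ N : Subgroup G, N.Normal → N ≤ K → N ≠ ⊥ → N = K)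
    (hP : ∃ P : Sylow p G, ¬ (P : Subgroup G).Normal) :
    MulAction.IsPretransitive G (Sylow p G) ∧
      ∀ P : Sylow p G, IsCoatom (MulAction.stabilizer G P) := by
  have : Fact p.Prime := ⟨hp⟩
  have : Fact q.Prime := ⟨hq⟩
  have : IsMulCommutative K :=
    Subgroup.isMulCommutative_of_minimal_normal_of_isPGroup (IsPGroup.of_card hKcard) hKmin
  refine ⟨inferInstance, fun P => ?_⟩
  have hPn := Sylow.not_normal_of_exists_not_normal hP P
  have hKP : K ⊔ P = ⊤ :=
    Subgroup.sup_eq_top_of_coprime (Nat.Coprime.pow t s ((Nat.coprime_primes hq hp).mpr hpq.symm))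
      (hcard.trans (mul_comm _ _)) hKcard.symm.dvd
      (P.pow_dvd_card_of_pow_dvd_card (hcard ▸ dvd_mul_right _ _))
  have hPmax : IsCoatom (P : Subgroup G) :=
    Subgroup.isCoatom_of_sup_eq_top hKmin hKP fun hPtop => hPn (hPtop ▸ inferInstance)
  rw [Sylow.stabilizer_eq_normalizer]
  exact Subgroup.normalizer_eq_self_of_isCoatom hPmax hPn ▸ hPmax

/-- Let `G` be a finite group of order `p^s·q^t` (`p ≠ q` primes, `s, t > 0`), let `K`
be a normal Sylow `q`-subgroup of `G` that is a minimal normal subgroup, and suppose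
some Sylow `p`-subgroup of `G` is not normal.  Then the conjugation action of `G` on
`Syl_p(G)` is primitive: it is transitive and all point stabilizers are maximal
subgroups (coatoms in the subgroup lattice). -/
theorem primitive_action_of_minimal_normal_sylow (p q s t : ℕ)
    (hp : p.Prime) (hq : q.Prime) (hpq : p ≠ q) (hs : 0 < s) (ht : 0 < t)
    (G : Type*) [Group G] [Finite G] (hcard : Nat.card G = p ^ s * q ^ t)
    (K : Subgroup G) (hKnormal : K.Normal) (hKcard : Nat.card K = q ^ t)
    (hKmin : ∀ N : Subgroup G, N.Normal → N ≤ K → N ≠ ⊥ → N = K)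
    (hP : ∃ P : Sylow p G, ¬ (P : Subgroup G).Normal) :
    MulAction.IsPretransitive G (Sylow p G) ∧
      ∀ P : Sylow p G, IsCoatom (MulAction.stabilizer G P) :=
  primitive_action_of_minimal_normal_sylow_general p q s t hp hq hpq G hcard K hKnormal hKcard hKmin
    hP
end
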